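/- arXiv:1805.08478 — 4 statements merged into one kernel-verified Lean document; each statement's English description precedes it below -/
import Mathlib

section
/- Let X be a CAT(0) cube complex, v a vertex of X, and r1, r2 two geodesic rays based at v. For i = 1,2 let 𝒲_i ⊆ 𝒲(r_i) denote the set of hyperplanes crossed by r_i that are adjacent to v. Then the union r1 ∪ r2 is a bi-infinite geodesic line if and only if 𝒲_1 ∩ 𝒲_2 = ∅. -/
/-!
We use the standard combinatorial model of a CAT(0) cube complex: it is identified
with its vertex set endowed with the combinatorial (ℓ¹) metric, i.e. with a median
graph `G` on a vertex type `V`.  Halfspaces are realised as the vertex sets of the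
two sides of the hyperplane dual to an edge, the Roller compactification `X̄` is the
set of ultrafilters of halfspaces, vertices embedding via principal ultrafilters,
and the Roller boundary `∂X` consists of the non-principal ultrafilters.
-/

open scoped ENNReal
open Set

namespace CCCR

variable {V V' : Type*}

/-- The interval between two vertices w.r.t. the combinatorial metric. -/
def vInterval (G : SimpleGraph V) (u v : V) : Set V :=
  {w : V | G.dist u w + G.dist w v = G.dist u v}

/-- Combinatorial model of a CAT(0) cube complex (identified with its vertex set,
endowed with the combinatorial metric): a connected median graph. -/
def IsCCC (G : SimpleGraph V) : Prop :=
  G.Connected ∧ ∀ x y z : V, ∃! m : V,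
    m ∈ vInterval G x y ∧ m ∈ vInterval G y z ∧ m ∈ vInterval G z x

/-- Halfspaces of the cube complex: the sides of the hyperplane dual to an edge. -/
def IsHalfspace (G : SimpleGraph V) (h : Set V) : Prop :=
  ∃ u v : V, G.Adj u v ∧ h = {w : V | G.dist w v < G.dist w u}

/-- The halfspace dual to the (oriented) edge `(u,v)` containing `v`. -/
def edgeHalf (G : SimpleGraph V) (u v : V) : Set V :=
  {w : V | G.dist w v < G.dist w u}

/-- The hyperplane (wall) dual to the edge `(u,v)`, recorded as its pair of sides. -/
def wallOf (G : SimpleGraph V) (u v : V) : Set (Set V) :=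
  {edgeHalf G u v, (edgeHalf G u v)ᶜ}

/-- Two (necessarily distinct) hyperplanes, with respective sides `h` and `k`,
are transverse: all four quarter-spaces are nonempty. -/
def Transv (h k : Set V) : Prop :=
  (h ∩ k).Nonempty ∧ (h ∩ kᶜ).Nonempty ∧ (hᶜ ∩ k).Nonempty ∧ (hᶜ ∩ kᶜ).Nonempty

/-- An ultrafilter of halfspaces: a point of the Roller compactification X̄.
It contains exactly one side of each hyperplane, and any two members intersect. -/
def IsUltra (G : SimpleGraph V) (σ : Set (Set V)) : Prop :=
  (∀ h ∈ σ, IsHalfspace G h) ∧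
  (∀ h : Set V, IsHalfspace G h → (h ∈ σ ↔ hᶜ ∉ σ)) ∧
  (∀ h ∈ σ, ∀ k ∈ σ, (h ∩ k).Nonempty)

/-- The principal ultrafilter of a vertex, i.e. the image of `v` in X̄. -/
def princ (G : SimpleGraph V) (v : V) : Set (Set V) :=
  {h : Set V | IsHalfspace G h ∧ v ∈ h}

/-- A point of the Roller boundary ∂X = X̄ ∖ X: a non-principal ultrafilter. -/
def IsBdryPt (G : SimpleGraph V) (σ : Set (Set V)) : Prop :=
  IsUltra G σ ∧ ∀ v : V, σ ≠ princ G v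

/-- The Roller boundary ∂X as a type. -/
abbrev Bdry (G : SimpleGraph V) : Type _ := {σ : Set (Set V) // IsBdryPt G σ}

/-- The Gromov product (x·y)_v = #𝒲(v | x, y) ∈ ℕ ∪ {+∞}, counted through the
sides containing both x and y but not v. -/
noncomputable def grom (_G : SimpleGraph V) (v : V) (x y : Set (Set V)) : ℕ∞ :=
  {h : Set V | h ∈ x ∧ h ∈ y ∧ v ∉ h}.encard

/-- The embedding ℕ ∪ {+∞} → ℤ ∪ {±∞}. -/
noncomputable def toE (n : ℕ∞) : EReal := ((n : ℝ≥0∞) : EReal)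

/-- The cross ratio cr_v(x,y,z,w) = (x·z)_v + (y·w)_v − (x·w)_v − (y·z)_v ∈ ℤ ∪ {±∞}. -/
noncomputable def crv (G : SimpleGraph V) (v : V) (x y z w : Set (Set V)) : EReal :=
  toE (grom G v x z) + toE (grom G v y w) - toE (grom G v x w) - toE (grom G v y z)

/-- The triple of sums of Gromov products attached to a 4-tuple. -/
noncomputable def tripod (G : SimpleGraph V) (v : V) (x y z w : Set (Set V)) :
    ℕ∞ × ℕ∞ × ℕ∞ :=
  (grom G v x y + grom G v z w, grom G v x z + grom G v y w, grom G v x w + grom G v y z)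

/-- (x,y,z,w) ∈ 𝒜 w.r.t. the basepoint v: at most one of the three sums is infinite. -/
def inA (G : SimpleGraph V) (v : V) (x y z w : Set (Set V)) : Prop :=
  ((tripod G v x y z w).1 ≠ ⊤ ∧ (tripod G v x y z w).2.1 ≠ ⊤) ∨
  ((tripod G v x y z w).1 ≠ ⊤ ∧ (tripod G v x y z w).2.2 ≠ ⊤) ∨
  ((tripod G v x y z w).2.1 ≠ ⊤ ∧ (tripod G v x y z w).2.2 ≠ ⊤)

/-- (x,y,z,w) ∈ 𝒜 (this is independent of the basepoint). -/
def memA (G : SimpleGraph V) (x y z w : Set (Set V)) : Prop :=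
  ∀ v : V, inA G v x y z w

/-- Two triples in (ℕ ∪ {+∞})³ are equivalent if they differ by adding a constant
n ∈ ℕ to all three entries. -/
def TripEquiv (p q : ℕ∞ × ℕ∞ × ℕ∞) : Prop :=
  (∃ n : ℕ, p.1 = q.1 + (n : ℕ∞) ∧ p.2.1 = q.2.1 + (n : ℕ∞) ∧ p.2.2 = q.2.2 + (n : ℕ∞)) ∨
  (∃ n : ℕ, q.1 = p.1 + (n : ℕ∞) ∧ q.2.1 = p.2.1 + (n : ℕ∞) ∧ q.2.2 = p.2.2 + (n : ℕ∞))

/-- crt(x,y,z,w) = ⟪a:b:c⟫ (the cross ratio triple is independent of the basepoint,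
so we require the equality of classes at every basepoint). -/
def crtEq (G : SimpleGraph V) (x y z w : Set (Set V)) (a b c : ℕ∞) : Prop :=
  ∀ v : V, TripEquiv (tripod G v x y z w) (a, b, c)

/-- The median of three points of X̄. -/
def med (x y z : Set (Set V)) : Set (Set V) := (x ∩ y) ∪ (y ∩ z) ∪ (z ∩ x)

/-- The interval I(x,y) ⊆ X̄ between two points of X̄. -/
def rInterval (G : SimpleGraph V) (x y : Set (Set V)) : Set (Set (Set V)) :=
  {σ : Set (Set V) | IsUltra G σ ∧ x ∩ y ⊆ σ}

/-- `Op G x y z` : x and y are opposite with respect to z, i.e. the median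
m = m(x,y,z) lies in X and I(x,y) = I(x,m) ∪ I(m,y). -/
def Op (G : SimpleGraph V) (x y z : Set (Set V)) : Prop :=
  (∃ p : V, med x y z = princ G p) ∧
  rInterval G x y = rInterval G x (med x y z) ∪ rInterval G (med x y z) y

/-- A geodesic ray (based at `r 0`). -/
def IsGeodRay (G : SimpleGraph V) (r : ℕ → V) : Prop :=
  (∀ n : ℕ, G.Adj (r n) (r (n + 1))) ∧
  ∀ m n : ℕ, m ≤ n → G.dist (r m) (r n) = n - m

/-- A bi-infinite geodesic line. -/
def IsGeodLine (G : SimpleGraph V) (L : ℤ → V) : Prop :=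
  (∀ n : ℤ, G.Adj (L n) (L (n + 1))) ∧
  ∀ m n : ℤ, m ≤ n → (G.dist (L m) (L n) : ℤ) = n - m

/-- The set 𝒲(r) of hyperplanes crossed by (the edges of) a ray. -/
def rayWalls (G : SimpleGraph V) (r : ℕ → V) : Set (Set (Set V)) :=
  {W : Set (Set V) | ∃ n : ℕ, W = wallOf G (r n) (r (n + 1))}

/-- A hyperplane is adjacent to `v` if it is dual to an edge incident to `v`. -/
def WallAdjTo (G : SimpleGraph V) (v : V) (W : Set (Set V)) : Prop :=
  ∃ u : V, G.Adj v u ∧ W = wallOf G v u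

/-- A straight ray: no two of the hyperplanes it crosses are transverse. -/
def RayStraight (G : SimpleGraph V) (r : ℕ → V) : Prop :=
  ∀ m n : ℕ, ¬ Transv (edgeHalf G (r m) (r (m + 1))) (edgeHalf G (r n) (r (n + 1)))

/-- A straight line: no two of the hyperplanes it crosses are transverse. -/
def LineStraight (G : SimpleGraph V) (L : ℤ → V) : Prop :=
  ∀ m n : ℤ, ¬ Transv (edgeHalf G (L m) (L (m + 1))) (edgeHalf G (L n) (L (n + 1)))

/-- The endpoint at infinity r⁺ ∈ ∂X of a ray: the ultrafilter of those halfspaces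
containing all but finitely many of its vertices. -/
def rayEnd (G : SimpleGraph V) (r : ℕ → V) : Set (Set V) :=
  {h : Set V | IsHalfspace G h ∧ ∃ N : ℕ, ∀ n : ℕ, N ≤ n → r n ∈ h}

/-- A straight point of the Roller boundary: the endpoint at infinity of a straight ray. -/
def IsStraightPt (G : SimpleGraph V) (x : Set (Set V)) : Prop :=
  ∃ r : ℕ → V, IsGeodRay G r ∧ RayStraight G r ∧ rayEnd G r = x

/-- x and y are the two endpoints at infinity of the line L. -/
def LineEnds (G : SimpleGraph V) (L : ℤ → V) (x y : Set (Set V)) : Prop :=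
  rayEnd G (fun n : ℕ => L (n : ℤ)) = x ∧ rayEnd G (fun n : ℕ => L (-(n : ℤ))) = y

/-- The edges from `v` to `a` and from `v` to `b` span a square. -/
def SpansSquare (G : SimpleGraph V) (v a b : V) : Prop :=
  ∃ w : V, w ≠ v ∧ G.Adj a w ∧ G.Adj b w

/-- An extremal vertex: some edge at `v` spans a square with every other edge at `v`. -/
def Extremal (G : SimpleGraph V) (v : V) : Prop :=
  ∃ a : V, G.Adj v a ∧ ∀ b : V, G.Adj v b → b ≠ a → SpansSquare G v a b

/-- The cube complex has no extremal vertices. -/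
def NoExtremal (G : SimpleGraph V) : Prop := ∀ v : V, ¬ Extremal G v

/-- A skinny vertex: exactly two incident edges. -/
def Skinny (G : SimpleGraph V) (v : V) : Prop := {u : V | G.Adj v u}.encard = 2

/-- A skinny ray: a geodesic ray whose initial vertex has at least three incident
edges and all of whose other vertices are skinny. -/
def IsSkinnyRay (G : SimpleGraph V) (r : ℕ → V) : Prop :=
  IsGeodRay G r ∧ 3 ≤ {u : V | G.Adj (r 0) u}.encard ∧ ∀ n : ℕ, 1 ≤ n → Skinny G (r n)

/-- (The vertex set of) a cube of the complex: a subset inducing a hypercube graph. -/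
def IsCube (G : SimpleGraph V) (c : Set V) : Prop :=
  ∃ (n : ℕ) (e : c ≃ (Fin n → Bool)),
    ∀ a b : c, G.Adj (a : V) (b : V) ↔ ∃! i : Fin n, e a i ≠ e b i

/-- A maximal cube. -/
def IsMaxCube (G : SimpleGraph V) (c : Set V) : Prop :=
  IsCube G c ∧ ∀ c' : Set V, IsCube G c' → c ⊆ c' → c' = c

/-- Completeness: there is no infinite ascending chain of cubes. -/
def CubeComplete (G : SimpleGraph V) : Prop :=
  ¬ ∃ c : ℕ → Set V, (∀ n : ℕ, IsCube G (c n)) ∧ ∀ n : ℕ, c n ⊂ c (n + 1)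

/-- No free faces: no non-maximal cube is contained in a unique maximal cube. -/
def NoFreeFaces (G : SimpleGraph V) : Prop :=
  ∀ c : Set V, IsCube G c → ¬ IsMaxCube G c → ¬ ∃! m : Set V, IsMaxCube G m ∧ c ⊆ m

/-- #𝒲(x, z | y, w): the number of hyperplanes separating x and z from y and w,
counted through the sides containing x and z. -/
noncomputable def sepCount (x z y w : Set (Set V)) : ℕ∞ :=
  {h : Set V | h ∈ x ∧ h ∈ z ∧ h ∉ y ∧ h ∉ w}.encard

/-- A Möbius map between Roller boundaries: it maps 𝒜(X) into 𝒜(Y) and preserves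
cross ratios. -/
def Mobius (G : SimpleGraph V) (G' : SimpleGraph V') (f : Bdry G → Bdry G') : Prop :=
  ∀ x y z w : Bdry G, memA G x.1 y.1 z.1 w.1 →
    memA G' (f x).1 (f y).1 (f z).1 (f w).1 ∧
    ∀ (v : V) (v' : V'),
      crv G' v' (f x).1 (f y).1 (f z).1 (f w).1 = crv G v x.1 y.1 z.1 w.1

/-- The induced action of a cubical isomorphism on X̄: an ultrafilter is mapped to
the set of images of its halfspaces. -/
def mapUltra (φ : V → V') (σ : Set (Set V)) : Set (Set V') :=
  (fun h : Set V => φ '' h) '' σ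

/-- The standard cubulation of ℝ: vertex set ℤ, edges between consecutive integers. -/
def zline : SimpleGraph ℤ := SimpleGraph.fromRel (fun m n => n = m + 1)

end CCCR

open CCCR

/-!
A geodesic line crosses every hyperplane at most once, so its two halves share no
hyperplane at all. Conversely, suppose `d(r₁ a, r₂ b) < a + b`. Then the median of `r₁ a`,
`r₂ b` and `v` is not `v`, and the first edge `(v, m)` of a geodesic from `v` to it has
both `r₁ a` and `r₂ b` on the side of `m`. A ray from `v` entering that halfspace crosses
the hyperplane of `(v, m)`: at the crossing edge `(u, u')` the distances to `v` and `m`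
form a ladder of squares between `(u, u')` and `(v, m)`, and opposite edges of a square
in a median graph define the same halfspace since median graphs contain no `K₂,₃`.
-/

namespace CCCR

variable {V : Type*} {G : SimpleGraph V}

open SimpleGraph

theorem IsGeodRay.dist_zero {r : ℕ → V} (hr : IsGeodRay G r) (n : ℕ) :
    G.dist (r 0) (r n) = n := by
  simpa using hr.2 0 n n.zero_le

theorem exists_adj_dist_add_one (hc : G.Connected) {u w : V} (h : u ≠ w) :
    ∃ x, G.Adj u x ∧ G.dist x w + 1 = G.dist u w := by
  obtain ⟨p, hp⟩ := hc.exists_walk_length_eq_dist u w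
  cases p with
  | nil => exact absurd rfl h
  | @cons _ x _ hadj q =>
    refine ⟨x, hadj, le_antisymm ?_ ?_⟩
    · rw [← hp, Walk.length_cons]
      exact Nat.succ_le_succ (dist_le q)
    · have := hc.dist_triangle (u := u) (v := x) (w := w)
      rw [dist_eq_one_iff_adj.mpr hadj] at this
      omega

namespace IsCCC

theorem dist_adj_parity (hG : IsCCC G) {u u' : V} (h : G.Adj u u') (w : V) :
    G.dist w u' = G.dist w u + 1 ∨ G.dist w u = G.dist w u' + 1 := by
  obtain ⟨m, ⟨hm1, hm2, hm3⟩, -⟩ := hG.2 u u' w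
  simp only [vInterval, Set.mem_ofPred_eq, dist_eq_one_iff_adj.mpr h] at hm1 hm2 hm3
  have hm : m = u ∨ m = u' := by
    rcases Nat.eq_zero_or_pos (G.dist u m) with h0 | h0
    · exact .inl (hG.1.dist_eq_zero_iff.mp h0).symm
    · exact .inr (hG.1.dist_eq_zero_iff.mp (by omega))
  rcases hm with rfl | rfl
  · grind [SimpleGraph.dist_comm, dist_eq_one_iff_adj]
  · grind [SimpleGraph.dist_comm, dist_eq_one_iff_adj]

theorem dist_eq_two_of_adj_of_adj (hG : IsCCC G) {u a b : V} (ha : G.Adj u a) (hb : G.Adj u b)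
    (hab : a ≠ b) : G.dist a b = 2 := by
  have h0 : G.dist a b ≠ 0 := fun h => hab (hG.1.dist_eq_zero_iff.mp h)
  have h1 : ¬ G.Adj a b := fun h => by
    rcases hG.dist_adj_parity h u with h' | h' <;>
      simp only [dist_eq_one_iff_adj.mpr ha, dist_eq_one_iff_adj.mpr hb] at h' <;> omega
  have := hG.1.dist_triangle (u := a) (v := u) (w := b)
  rw [SimpleGraph.dist_comm (v := u), dist_eq_one_iff_adj.mpr ha, dist_eq_one_iff_adj.mpr hb]
    at this
  grind [dist_eq_one_iff_adj]

theorem exists_adj_adj_dist_add_one (hG : IsCCC G) {u x w : V} (hux : G.dist u x = 2)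
    (hw : G.dist w u = G.dist w x) :
    ∃ p, G.Adj u p ∧ G.Adj p x ∧ G.dist w p + 1 = G.dist w x := by
  obtain ⟨p, ⟨h1, h2, h3⟩, -⟩ := hG.2 u x w
  simp only [vInterval, Set.mem_ofPred_eq] at h1 h2 h3
  refine ⟨p, dist_eq_one_iff_adj.mp ?_, dist_eq_one_iff_adj.mp ?_, ?_⟩ <;>
    grind [SimpleGraph.dist_comm]

theorem eq_of_three_common_adj (hG : IsCCC G) {u x a b c : V} (hab : a ≠ b) (hbc : b ≠ c)
    (hac : a ≠ c) (hua : G.Adj u a) (hub : G.Adj u b) (huc : G.Adj u c) (hxa : G.Adj x a)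
    (hxb : G.Adj x b) (hxc : G.Adj x c) : u = x := by
  have dab := hG.dist_eq_two_of_adj_of_adj hua hub hab
  have dbc := hG.dist_eq_two_of_adj_of_adj hub huc hbc
  have dca := hG.dist_eq_two_of_adj_of_adj huc hua hac.symm
  have hmed : ∀ y, G.Adj y a → G.Adj y b → G.Adj y c →
      y ∈ vInterval G a b ∧ y ∈ vInterval G b c ∧ y ∈ vInterval G c a := by
    intro y ha hb hc
    simp only [vInterval, Set.mem_ofPred_eq, dab, dbc, dca, dist_eq_one_iff_adj.mpr ha,
      dist_eq_one_iff_adj.mpr hb, dist_eq_one_iff_adj.mpr hc,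
      dist_eq_one_iff_adj.mpr ha.symm, dist_eq_one_iff_adj.mpr hb.symm,
      dist_eq_one_iff_adj.mpr hc.symm, and_self]
  exact (hG.2 a b c).unique (hmed u hua hub huc) (hmed x hxa hxb hxc)

theorem edgeHalf_subset_of_square (hG : IsCCC G) {u u' x q : V} (huu' : G.Adj u u')
    (hu'x : G.Adj u' x) (hxq : G.Adj x q) (hqu : G.Adj q u) (hux : G.dist u x = 2)
    (hqu' : G.dist q u' = 2) : edgeHalf G q x ⊆ edgeHalf G u u' := by
  intro w hw
  simp only [edgeHalf, Set.mem_ofPred_eq] at hw ⊢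
  by_contra hwu
  have pqx := hG.dist_adj_parity hxq w
  have puu' := hG.dist_adj_parity huu' w
  have pu'x := hG.dist_adj_parity hu'x w
  have hwq : G.dist w q = G.dist w x + 1 := by omega
  have hwu' : G.dist w u' = G.dist w u + 1 := by omega
  have hwux : G.dist w u = G.dist w x := by
    rcases hG.dist_adj_parity hqu w with h | h <;> omega
  -- `u` and `x` would have three common neighbours: one closer to `w`, and `q`, `u'`
  obtain ⟨p, hup, hpx, hwp⟩ := hG.exists_adj_adj_dist_add_one hux hwux
  have hqu'_ne : q ≠ u' := by
    rintro rfl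
    simp at hqu'
  have := hG.eq_of_three_common_adj (a := p) (b := q) (c := u')
    (by rintro rfl; omega) hqu'_ne (by rintro rfl; omega)
    hup hqu.symm huu' hpx.symm hxq hu'x.symm
  subst this
  simp at hux

theorem edgeHalf_eq_of_square (hG : IsCCC G) {u u' x q : V} (huu' : G.Adj u u')
    (hu'x : G.Adj u' x) (hxq : G.Adj x q) (hqu : G.Adj q u) (hux : G.dist u x = 2)
    (hqu' : G.dist q u' = 2) : edgeHalf G q x = edgeHalf G u u' :=
  (hG.edgeHalf_subset_of_square huu' hu'x hxq hqu hux hqu').antisymm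
    (hG.edgeHalf_subset_of_square hxq.symm hu'x.symm huu'.symm hqu.symm hqu' hux)

theorem edgeHalf_eq_of_dist (hG : IsCCC G) {v m u u' : V} {k : ℕ} (hvm : G.Adj v m)
    (huu' : G.Adj u u') (huv : G.dist u v = k) (hu'm : G.dist u' m = k)
    (hu'v : G.dist u' v = k + 1) (hum : G.dist u m = k + 1) :
    edgeHalf G u u' = edgeHalf G v m := by
  induction k generalizing u u' with
  | zero =>
    rw [hG.1.dist_eq_zero_iff.mp huv, hG.1.dist_eq_zero_iff.mp hu'm]
  | succ k ih =>
    -- `(q, x)` is the edge of the square on `(u, u')` one step closer to `(v, m)`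
    obtain ⟨x, hu'x, hxm⟩ := exists_adj_dist_add_one hG.1 (u := u') (w := m)
      (by rintro rfl; simp at hu'm)
    have hxv : G.dist x v = k + 1 := by
      rcases hG.dist_adj_parity hu'x v with h | h <;>
        rcases hG.dist_adj_parity hvm x with h' | h' <;> grind [SimpleGraph.dist_comm]
    have hux : G.dist u x = 2 :=
      hG.dist_eq_two_of_adj_of_adj huu'.symm hu'x (by rintro rfl; omega)
    obtain ⟨q, huq, hqx, hvq⟩ := hG.exists_adj_adj_dist_add_one hux
      (w := v) (by grind [SimpleGraph.dist_comm])
    have hqm : G.dist q m = k + 1 := by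
      have := hG.1.dist_triangle (u := u) (v := q) (w := m)
      rcases hG.dist_adj_parity hqx m with h | h <;>
        grind [SimpleGraph.dist_comm, dist_eq_one_iff_adj]
    have hqu' : G.dist q u' = 2 :=
      hG.dist_eq_two_of_adj_of_adj hqx.symm hu'x.symm
        (by rintro rfl; grind [SimpleGraph.dist_comm])
    rw [← hG.edgeHalf_eq_of_square huu' hu'x hqx.symm huq.symm hux hqu']
    exact ih hqx (by grind [SimpleGraph.dist_comm]) (by omega) hxv hqm

theorem wallOf_mem_rayWalls (hG : IsCCC G) {r : ℕ → V} (hr : IsGeodRay G r) {m : V}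
    (hm : G.Adj (r 0) m) {a : ℕ} (ha : r a ∈ edgeHalf G (r 0) m) :
    wallOf G (r 0) m ∈ rayWalls G r := by
  induction a with
  | zero => simp [edgeHalf] at ha
  | succ k ih =>
    by_cases hk' : r k ∈ edgeHalf G (r 0) m
    · exact ih hk'
    simp only [edgeHalf, Set.mem_ofPred_eq, not_lt] at ha hk'
    have hd := hr.dist_zero
    have hkm : G.dist (r k) m = k + 1 := by
      rcases hG.dist_adj_parity hm (r k) with h | h <;> grind [SimpleGraph.dist_comm]
    have hk1m : G.dist (r (k + 1)) m = k := by
      rcases hG.dist_adj_parity hm (r (k + 1)) with h | h <;> grind [SimpleGraph.dist_comm]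
    refine ⟨k, ?_⟩
    rw [wallOf, wallOf, hG.edgeHalf_eq_of_dist hm (hr.1 k) (by grind [SimpleGraph.dist_comm])
      hk1m (by grind [SimpleGraph.dist_comm]) hkm]

theorem dist_eq_add_of_forall_adj (hG : IsCCC G) {r₁ r₂ : ℕ → V} (h₁ : IsGeodRay G r₁)
    (h₂ : IsGeodRay G r₂) (h₀ : r₁ 0 = r₂ 0)
    (hW : ∀ m, G.Adj (r₁ 0) m → wallOf G (r₁ 0) m ∈ rayWalls G r₁ →
      wallOf G (r₁ 0) m ∉ rayWalls G r₂) (a b : ℕ) :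
    G.dist (r₁ a) (r₂ b) = a + b := by
  obtain ⟨p, ⟨hp₁, hp₂, hp₃⟩, -⟩ := hG.2 (r₁ a) (r₂ b) (r₁ 0)
  simp only [vInterval, Set.mem_ofPred_eq] at hp₁ hp₂ hp₃
  have ha := h₁.dist_zero a
  have hb := h₂.dist_zero b
  rw [← h₀] at hb
  by_cases hp : r₁ 0 = p
  · subst hp
    grind [SimpleGraph.dist_comm]
  obtain ⟨m, hm, hmp⟩ := exists_adj_dist_add_one hG.1 hp
  have hma := hG.1.dist_triangle (u := r₁ a) (v := p) (w := m)
  have hmb := hG.1.dist_triangle (u := r₂ b) (v := p) (w := m)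
  have ha' : r₁ a ∈ edgeHalf G (r₁ 0) m := by
    simp only [edgeHalf, Set.mem_ofPred_eq]
    grind [SimpleGraph.dist_comm]
  have hb' : r₂ b ∈ edgeHalf G (r₂ 0) m := by
    simp only [edgeHalf, Set.mem_ofPred_eq, ← h₀]
    grind [SimpleGraph.dist_comm]
  exact (hW m hm (hG.wallOf_mem_rayWalls h₁ hm ha')
    (h₀ ▸ hG.wallOf_mem_rayWalls h₂ (h₀ ▸ hm) hb')).elim

end IsCCC

theorem disjoint_rayWalls_of_dist_eq_add {r₁ r₂ : ℕ → V} (h₁ : IsGeodRay G r₁)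
    (hd : ∀ a b : ℕ, G.dist (r₁ a) (r₂ b) = a + b) :
    Disjoint (rayWalls G r₁) (rayWalls G r₂) := by
  rw [Set.disjoint_left]
  rintro _ ⟨k, rfl⟩ ⟨l, hl⟩
  have hd₁ := h₁.dist_zero
  have hk : G.dist (r₁ (k + 1)) (r₁ k) = 1 := dist_eq_one_iff_adj.mpr (h₁.1 k).symm
  have hmem : edgeHalf G (r₁ k) (r₁ (k + 1)) ∈ wallOf G (r₂ l) (r₂ (l + 1)) := by
    rw [← hl]; exact Set.mem_insert _ _
  rcases hmem with heq | heq
  · have hin : r₁ (k + 1) ∈ edgeHalf G (r₁ k) (r₁ (k + 1)) := by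
      simp [edgeHalf, hk]
    rw [heq] at hin
    simp only [edgeHalf, Set.mem_ofPred_eq, hd] at hin
    omega
  · have hout : r₁ 0 ∉ edgeHalf G (r₁ k) (r₁ (k + 1)) := by
      simp only [edgeHalf, Set.mem_ofPred_eq, hd₁]
      omega
    rw [Set.mem_singleton_iff.mp heq] at hout
    simp only [edgeHalf, Set.mem_compl_iff, Set.mem_ofPred_eq, hd, not_not] at hout
    omega

theorem isGeodLine_concat_iff {r₁ r₂ : ℕ → V} (h₁ : IsGeodRay G r₁) (h₂ : IsGeodRay G r₂)
    (h₀ : r₁ 0 = r₂ 0) :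
    IsGeodLine G (fun n : ℤ => if 0 ≤ n then r₂ n.toNat else r₁ (-n).toNat) ↔
      ∀ a b : ℕ, G.dist (r₁ a) (r₂ b) = a + b := by
  set L := fun n : ℤ => if 0 ≤ n then r₂ n.toNat else r₁ (-n).toNat
  have hpos (b : ℕ) : L b = r₂ b := by simp [L]
  have hneg (a : ℕ) : L (-a) = r₁ a := by
    rcases a.eq_zero_or_pos with rfl | ha
    · simp [L, h₀]
    · simp [L, ha.ne']
  constructor
  · intro hL a b
    have := hL.2 (-a) b (by omega)
    rw [hneg, hpos] at this
    omega
  · intro hd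
    refine ⟨fun n => ?_, fun m n hmn => ?_⟩
    · cases n with
      | ofNat b =>
        rw [Int.ofNat_eq_natCast, ← Nat.cast_succ, hpos, hpos]
        exact h₂.1 b
      | negSucc a =>
        rw [Int.negSucc_eq, show -((a : ℤ) + 1) + 1 = -(a : ℤ) by ring, ← Nat.cast_succ, hneg,
          hneg]
        exact (h₁.1 a).symm
    · rcases Int.eq_nat_or_neg m with ⟨a, rfl | rfl⟩ <;>
        rcases Int.eq_nat_or_neg n with ⟨b, rfl | rfl⟩ <;>
        simp only [hpos, hneg]
      · have := h₂.2 a b (by omega); omega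
      · obtain rfl : a = 0 := by omega
        obtain rfl : b = 0 := by omega
        simp [h₀]
      · rw [hd]; push_cast; ring
      · rw [SimpleGraph.dist_comm, h₁.2 b a (by omega)]
        omega

end CCCR

/-- Lemma `straight rays 2`: given a vertex `v` and two rays based
at `v`, their union is a bi-infinite geodesic line if and only if no hyperplane
adjacent to `v` is crossed by both rays. -/
theorem stmt0 {V : Type*} (G : SimpleGraph V) (hG : IsCCC G) (v : V)
    (r1 r2 : ℕ → V) (h1 : IsGeodRay G r1) (h2 : IsGeodRay G r2)
    (hb1 : r1 0 = v) (hb2 : r2 0 = v) :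
    IsGeodLine G (fun n : ℤ => if 0 ≤ n then r2 n.toNat else r1 (-n).toNat) ↔
      {W : Set (Set V) | W ∈ rayWalls G r1 ∧ WallAdjTo G v W} ∩
        {W : Set (Set V) | W ∈ rayWalls G r2 ∧ WallAdjTo G v W} = ∅ := by
  subst hb1
  rw [isGeodLine_concat_iff h1 h2 hb2.symm, Set.eq_empty_iff_forall_notMem]
  constructor
  · rintro hd W ⟨⟨hW₁, -⟩, hW₂, -⟩
    exact Set.disjoint_left.mp (disjoint_rayWalls_of_dist_eq_add h1 hd) hW₁ hW₂
  · intro hW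
    exact hG.dist_eq_add_of_forall_adj h1 h2 hb2.symm fun m hm hm₁ hm₂ =>
      hW _ ⟨⟨hm₁, m, hm, rfl⟩, hm₂, m, hm, rfl⟩
end

section
/- Let X be a CAT(0) cube complex with no extremal vertices. Then every edge of X is contained in a straight bi-infinite geodesic line. -/
/-!
We use the standard combinatorial model of a CAT(0) cube complex: it is identified
with its vertex set endowed with the combinatorial (ℓ¹) metric, i.e. with a median
graph `G` on a vertex type `V`.  Halfspaces are realised as the vertex sets of the
two sides of the hyperplane dual to an edge, the Roller compactification `X̄` is the
set of ultrafilters of halfspaces, vertices embedding via principal ultrafilters,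
and the Roller boundary `∂X` consists of the non-principal ultrafilters.
-/

open scoped ENNReal
open Set

/-!
At a vertex `b` reached along an edge `(a, b)`, a non-extremal vertex always offers a next edge
`(b, c)` that spans no square with `(b, a)`. In a median graph such a turn nests the halfspaces:
the side of `(b, c)` containing `c` lies inside the side of `(a, b)` containing `b`. Extending an
edge in both directions by such turns gives a bi-infinite path whose forward halfspaces form a
decreasing chain; a path that never re-enters a halfspace it has left is geodesic, and nested
hyperplanes are never transverse.
-/

namespace CCCR

variable {V : Type*} {G : SimpleGraph V}

lemma eq_or_eq_or_adj_of_mem_vInterval (hconn : G.Connected) {a c m : V}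
    (hac : G.dist a c = 2) (hm : m ∈ vInterval G a c) :
    m = a ∨ m = c ∨ (G.Adj a m ∧ G.Adj m c) := by
  simp only [vInterval, Set.mem_ofPred_eq, hac] at hm
  rcases (by omega : G.dist a m = 0 ∨ G.dist m c = 0 ∨ (G.dist a m = 1 ∧ G.dist m c = 1))
    with h | h | ⟨h₁, h₂⟩
  · exact Or.inl (hconn.dist_eq_zero_iff.mp h).symm
  · exact Or.inr (Or.inl (hconn.dist_eq_zero_iff.mp h))
  · exact Or.inr (Or.inr
      ⟨SimpleGraph.dist_eq_one_iff_adj.mp h₁, SimpleGraph.dist_eq_one_iff_adj.mp h₂⟩)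

namespace IsCCC

variable (hG : IsCCC G)
include hG

/-- Median graphs are bipartite. -/
lemma dist_ne_dist_of_adj {a b : V} (hab : G.Adj a b) (x : V) : G.dist x a ≠ G.dist x b := by
  intro h
  obtain ⟨m, ⟨hxa, hab', hbx⟩, -⟩ := hG.2 x a b
  simp only [vInterval, Set.mem_ofPred_eq, SimpleGraph.dist_eq_one_iff_adj.mpr hab] at hxa hab' hbx
  have hba : G.dist b a = 1 := SimpleGraph.dist_eq_one_iff_adj.mpr hab.symm
  have hax : G.dist a x = G.dist x a := SimpleGraph.dist_comm
  have hbx' : G.dist b x = G.dist x b := SimpleGraph.dist_comm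
  rcases (by omega : G.dist a m = 0 ∨ G.dist m b = 0) with h₀ | h₀
  · rw [← hG.1.dist_eq_zero_iff.mp h₀] at hbx
    omega
  · rw [hG.1.dist_eq_zero_iff.mp h₀] at hxa
    omega

lemma dist_eq_succ_of_mem_edgeHalf {a b x : V} (hab : G.Adj a b) (hx : x ∈ edgeHalf G a b) :
    G.dist x a = G.dist x b + 1 := by
  have h₁ : G.dist x a ≤ G.dist x b + G.dist b a := hG.1.dist_triangle
  rw [SimpleGraph.dist_eq_one_iff_adj.mpr hab.symm] at h₁
  have := hG.dist_ne_dist_of_adj hab x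
  simp only [edgeHalf, Set.mem_ofPred_eq] at hx
  omega

lemma dist_eq_succ_of_notMem_edgeHalf {a b x : V} (hab : G.Adj a b)
    (hx : x ∉ edgeHalf G a b) : G.dist x b = G.dist x a + 1 := by
  have h₁ : G.dist x b ≤ G.dist x a + G.dist a b := hG.1.dist_triangle
  rw [SimpleGraph.dist_eq_one_iff_adj.mpr hab] at h₁
  have := hG.dist_ne_dist_of_adj hab x
  simp only [edgeHalf, Set.mem_ofPred_eq, not_lt] at hx
  omega

lemma dist_eq_two_of_adj_of_adj_s1 {a b c : V} (hab : G.Adj a b) (hbc : G.Adj b c) (hca : c ≠ a) :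
    G.dist a c = 2 := by
  have h₁ : G.dist a c ≤ G.dist a b + G.dist b c := hG.1.dist_triangle
  rw [SimpleGraph.dist_eq_one_iff_adj.mpr hab, SimpleGraph.dist_eq_one_iff_adj.mpr hbc] at h₁
  have h₀ : G.dist a c ≠ 0 := fun h => hca (hG.1.dist_eq_zero_iff.mp h).symm
  have hne := hG.dist_ne_dist_of_adj hbc a
  rw [SimpleGraph.dist_eq_one_iff_adj.mpr hab] at hne
  omega

lemma edgeHalf_subset_edgeHalf {a b c : V} (hab : G.Adj a b) (hbc : G.Adj b c) (hca : c ≠ a)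
    (hsq : ¬ SpansSquare G b a c) : edgeHalf G b c ⊆ edgeHalf G a b := by
  intro x hx
  by_contra hxa
  have hxb := hG.dist_eq_succ_of_mem_edgeHalf hbc hx
  have hxa' := hG.dist_eq_succ_of_notMem_edgeHalf hab hxa
  have hac := hG.dist_eq_two_of_adj_of_adj_s1 hab hbc hca
  obtain ⟨m, ⟨hm, hmc, hma⟩, -⟩ := hG.2 a c x
  simp only [vInterval, Set.mem_ofPred_eq] at hmc hma
  have hca' : G.dist c a = 2 := SimpleGraph.dist_comm.trans hac
  have hcb : G.dist c b = 1 := SimpleGraph.dist_eq_one_iff_adj.mpr hbc.symm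
  have hax : G.dist a x = G.dist x a := SimpleGraph.dist_comm
  have hbx : G.dist b x = G.dist x b := SimpleGraph.dist_comm
  have hcx : G.dist c x = G.dist x c := SimpleGraph.dist_comm
  -- `x` is equidistant from `a` and `c`, so their median with `x` is a common neighbour of
  -- `a` and `c`; any such neighbour other than `b` would span a square at `b`.
  rcases eq_or_eq_or_adj_of_mem_vInterval hG.1 hac hm with rfl | rfl | ⟨ham, hmc'⟩
  · omega
  · omega
  · obtain rfl : m = b := by
      by_contra hmb
      exact hsq ⟨m, hmb, ham, hmc'.symm⟩
    omega

end IsCCC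

def IsStraightTurn (G : SimpleGraph V) (a b c : V) : Prop :=
  G.Adj a b ∧ G.Adj b c ∧ c ≠ a ∧ ¬ SpansSquare G b a c

lemma IsStraightTurn.symm {a b c : V} (h : IsStraightTurn G a b c) : IsStraightTurn G c b a := by
  obtain ⟨hab, hbc, hca, hsq⟩ := h
  exact ⟨hbc.symm, hab.symm, hca.symm, fun ⟨w, hwb, hcw, haw⟩ => hsq ⟨w, hwb, haw, hcw⟩⟩

lemma NoExtremal.exists_isStraightTurn (hne : NoExtremal G) {a b : V} (hab : G.Adj a b) :
    ∃ c, IsStraightTurn G a b c := by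
  have h := hne b
  simp only [Extremal, not_exists, not_and, not_forall] at h
  obtain ⟨c, hbc, hca, hsq⟩ := h a hab.symm
  exact ⟨c, hab, hbc, hca, hsq⟩

lemma NoExtremal.exists_seq_isStraightTurn (hne : NoExtremal G) {u w : V} (huw : G.Adj u w) :
    ∃ r : ℕ → V, r 0 = u ∧ r 1 = w ∧ ∀ n, IsStraightTurn G (r n) (r (n + 1)) (r (n + 2)) := by
  choose next hnext using fun e : {p : V × V // G.Adj p.1 p.2} => hne.exists_isStraightTurn e.2
  let step (e : {p : V × V // G.Adj p.1 p.2}) : {p : V × V // G.Adj p.1 p.2} :=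
    ⟨(e.1.2, next e), (hnext e).2.1⟩
  let edge (n : ℕ) := step^[n] ⟨(u, w), huw⟩
  have hedge (n : ℕ) : edge (n + 1) = step (edge n) := Function.iterate_succ_apply' ..
  refine ⟨fun n => (edge n).1.1, rfl, rfl, fun n => ?_⟩
  simpa only [hedge] using hnext (edge n)

lemma IsCCC.antitone_edgeHalf (hG : IsCCC G) {L : ℤ → V}
    (hL : ∀ n, IsStraightTurn G (L n) (L (n + 1)) (L (n + 2))) :
    Antitone fun n => edgeHalf G (L n) (L (n + 1)) := by
  refine antitone_int_of_succ_le fun n => ?_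
  obtain ⟨hab, hbc, hca, hsq⟩ := hL n
  rw [add_assoc, one_add_one_eq_two]
  exact hG.edgeHalf_subset_edgeHalf hab hbc hca hsq

lemma IsCCC.isGeodLine_of_antitone (hG : IsCCC G) {L : ℤ → V}
    (hadj : ∀ n, G.Adj (L n) (L (n + 1)))
    (hanti : Antitone fun n => edgeHalf G (L n) (L (n + 1))) : IsGeodLine G L := by
  have hdist (m : ℤ) (k : ℕ) : G.dist (L m) (L (m + k)) = k := by
    induction k with
    | zero => simp
    | succ k ih =>
      have hout : L m ∉ edgeHalf G (L (m + k)) (L (m + k + 1)) := fun h => by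
        have := hanti (by omega : m ≤ m + k) h
        simp [edgeHalf] at this
      rw [Nat.cast_succ, ← add_assoc, hG.dist_eq_succ_of_notMem_edgeHalf (hadj _) hout, ih]
  refine ⟨hadj, fun m n hmn => ?_⟩
  obtain ⟨k, rfl⟩ := Int.le.dest hmn
  rw [hdist m k]
  ring

lemma lineStraight_of_antitone {L : ℤ → V}
    (hanti : Antitone fun n => edgeHalf G (L n) (L (n + 1))) : LineStraight G L := by
  rintro m n ⟨-, hmn, hnm, -⟩
  rcases le_total m n with h | h
  · obtain ⟨x, hxm, hxn⟩ := hnm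
    exact hxm (hanti h hxn)
  · obtain ⟨x, hxm, hxn⟩ := hmn
    exact hxn (hanti h hxm)

lemma exists_int_seq_of_nat_seqs {r s : ℕ → V} (h₀ : s 1 = r 0) (h₁ : s 0 = r 1) :
    ∃ L : ℤ → V, (∀ n : ℕ, L n = r n) ∧ ∀ n : ℕ, L (1 - n) = s n := by
  refine ⟨fun n => if 0 ≤ n then r n.toNat else s (1 - n).toNat, fun n => by simp, fun n => ?_⟩
  rcases n with _ | _ | n
  · simp [h₁]
  · simp [h₀]
  · have hneg : ¬ (0 : ℤ) ≤ 1 - (n + 2 : ℕ) := by omega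
    simp only [if_neg hneg, show (1 - (1 - (n + 2 : ℕ) : ℤ)).toNat = n + 2 by omega]

end CCCR

open CCCR
/-- Lemma `straight rays`: in a CAT(0) cube complex with no
extremal vertices, every edge extends to a straight bi-infinite geodesic line. -/
theorem stmt1 {V : Type*} (G : SimpleGraph V) (hG : IsCCC G) (hne : NoExtremal G)
    (u w : V) (huw : G.Adj u w) :
    ∃ L : ℤ → V, IsGeodLine G L ∧ LineStraight G L ∧ L 0 = u ∧ L 1 = w := by
  obtain ⟨r, hr₀, hr₁, hr⟩ := hne.exists_seq_isStraightTurn huw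
  obtain ⟨s, hs₀, hs₁, hs⟩ := hne.exists_seq_isStraightTurn huw.symm
  obtain ⟨L, hLr, hLs⟩ := exists_int_seq_of_nat_seqs (hs₁.trans hr₀.symm) (hs₀.trans hr₁.symm)
  have hturn (n : ℤ) : IsStraightTurn G (L n) (L (n + 1)) (L (n + 2)) := by
    rcases le_or_gt 0 n with hn | hn
    · lift n to ℕ using hn
      simpa only [← hLr, Nat.cast_add, Nat.cast_one, Nat.cast_ofNat] using hr n
    · obtain ⟨k, rfl⟩ : ∃ k : ℕ, n = 1 - (k + 2 : ℕ) := ⟨(-n - 1).toNat, by omega⟩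
      have := (hs k).symm
      rwa [← hLs, ← hLs, ← hLs, show (1 - (k + 1 : ℕ) : ℤ) = 1 - (k + 2 : ℕ) + 1 by omega,
        show (1 - k : ℤ) = 1 - (k + 2 : ℕ) + 2 by omega] at this
  have hanti := hG.antitone_edgeHalf hturn
  refine ⟨L, hG.isGeodLine_of_antitone (fun n => (hturn n).1) hanti, lineStraight_of_antitone hanti,
    ?_, ?_⟩
  · simpa [hr₀] using hLr 0
  · simpa [hr₁] using hLr 1
end

section
/- Let X be a CAT(0) cube complex. For every vertex v ∈ X and every 4-tuple (x,y,z,w) ∈ 𝒜, one has cr_v(x,y,z,w) = #𝒲({x,z}|{y,w}) − #𝒲({x,w}|{y,z}), where at most one of the two cardinalities on the right is infinite. -/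
/-!
We use the standard combinatorial model of a CAT(0) cube complex: it is identified
with its vertex set endowed with the combinatorial (ℓ¹) metric, i.e. with a median
graph `G` on a vertex type `V`.  Halfspaces are realised as the vertex sets of the
two sides of the hyperplane dual to an edge, the Roller compactification `X̄` is the
set of ultrafilters of halfspaces, vertices embedding via principal ultrafilters,
and the Roller boundary `∂X` consists of the non-principal ultrafilters.
-/

open scoped ENNReal
open Set

/-!
Fix `v` and orient every hyperplane by its side `h` not containing `v`; let `X` be the set of
such sides lying in `x`, and similarly `Y`, `Z`, `W`. Then `(x·z)_v = #(X ∩ Z)`, and so on.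
Pointwise, `1_X 1_Z + 1_Y 1_W - 1_X 1_W - 1_Y 1_Z = (1_X - 1_Y)(1_Z - 1_W)`, which vanishes
unless the set of points among `x, y, z, w` whose ultrafilter contains `h` is exactly
`{x,z}`, `{y,w}`, `{x,w}` or `{y,z}`. A hyperplane of `𝒲(x,z|y,w)` has exactly one side
avoiding `v`, and that side is of type `{x,z}` or `{y,w}`; so
`(x·z)_v + (y·w)_v + #𝒲(x,w|y,z) = (x·w)_v + (y·z)_v + #𝒲(x,z|y,w)` in `ℕ ∪ {∞}`,
and the membership `(x,y,z,w) ∈ 𝒜` is exactly what allows cancelling in `ℤ ∪ {±∞}`.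
-/

namespace Set

variable {α : Type*}

theorem encard_inter_add_inter_add_diff_add_diff (X Y Z W : Set α) :
    (X ∩ Z).encard + (Y ∩ W).encard + ((X ∩ W) \ (Y ∪ Z)).encard +
        ((Y ∩ Z) \ (X ∪ W)).encard =
      ((X ∪ Y) ∩ (Z ∪ W)).encard + (X ∩ Y ∩ Z ∩ W).encard := by
  have hunion :
      X ∩ Z ∪ Y ∩ W ∪ ((X ∩ W) \ (Y ∪ Z)) ∪ ((Y ∩ Z) \ (X ∪ W)) = (X ∪ Y) ∩ (Z ∪ W) := by
    ext; simp only [mem_union, mem_inter_iff, mem_sdiff]; tauto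
  have hinter : X ∩ Z ∩ (Y ∩ W) = X ∩ Y ∩ Z ∩ W := by
    ext; simp only [mem_inter_iff]; tauto
  have hdisj₁ : Disjoint (X ∩ Z ∪ Y ∩ W) ((X ∩ W) \ (Y ∪ Z)) := by
    rw [disjoint_left]; simp only [mem_union, mem_inter_iff, mem_sdiff]; tauto
  have hdisj₂ : Disjoint (X ∩ Z ∪ Y ∩ W ∪ ((X ∩ W) \ (Y ∪ Z))) ((Y ∩ Z) \ (X ∪ W)) := by
    rw [disjoint_left]; simp only [mem_union, mem_inter_iff, mem_sdiff]; tauto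
  rw [← encard_union_add_encard_inter, hinter, ← hunion, encard_union_eq hdisj₂,
    encard_union_eq hdisj₁]
  ring

theorem encard_inter_add_inter_add_diff_add_diff_swap (X Y Z W : Set α) :
    (X ∩ Z).encard + (Y ∩ W).encard +
        (((X ∩ W) \ (Y ∪ Z)).encard + ((Y ∩ Z) \ (X ∪ W)).encard) =
      (X ∩ W).encard + (Y ∩ Z).encard +
        (((X ∩ Z) \ (Y ∪ W)).encard + ((Y ∩ W) \ (X ∪ Z)).encard) := by
  have h₁ := encard_inter_add_inter_add_diff_add_diff X Y Z W
  have h₂ := encard_inter_add_inter_add_diff_add_diff X Y W Z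
  rw [union_comm W Z, inter_right_comm (X ∩ Y) W Z] at h₂
  rw [← add_assoc, ← add_assoc, h₁, ← h₂]

end Set

namespace CCCR

open Set

variable {V : Type*} {G : SimpleGraph V}

def awayFrom (v : V) (x : Set (Set V)) : Set (Set V) := {h ∈ x | v ∉ h}

theorem grom_eq_encard_awayFrom_inter (v : V) (x y : Set (Set V)) :
    grom G v x y = (awayFrom v x ∩ awayFrom v y).encard := by
  unfold grom awayFrom
  congr 1
  ext
  simp only [mem_inter_iff, mem_ofPred_eq]
  tauto

theorem IsUltra.compl_mem_iff {σ : Set (Set V)} (hσ : IsUltra G σ) {h : Set V}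
    (hh : IsHalfspace G h) : hᶜ ∈ σ ↔ h ∉ σ := by
  rw [hσ.2.1 h hh, not_not]

theorem sepCount_eq_encard_awayFrom {x y z w : Set (Set V)} (hx : IsUltra G x)
    (hy : IsUltra G y) (hz : IsUltra G z) (hw : IsUltra G w) (v : V) :
    sepCount x z y w =
      ((awayFrom v x ∩ awayFrom v z) \ (awayFrom v y ∪ awayFrom v w)).encard +
        ((awayFrom v y ∩ awayFrom v w) \ (awayFrom v x ∪ awayFrom v z)).encard := by
  set P := (awayFrom v x ∩ awayFrom v z) \ (awayFrom v y ∪ awayFrom v w)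
  set Q := (awayFrom v y ∩ awayFrom v w) \ (awayFrom v x ∪ awayFrom v z)
  -- the side of a separating hyperplane that contains `v` is the complement of a member of `Q`
  have hsplit : {h : Set V | h ∈ x ∧ h ∈ z ∧ h ∉ y ∧ h ∉ w} = P ∪ compl '' Q := by
    ext h
    simp only [P, Q, awayFrom, mem_union, mem_sdiff, mem_inter_iff, mem_image, mem_ofPred_eq]
    constructor
    · rintro ⟨hhx, hhz, hhy, hhw⟩
      have hh := hx.1 h hhx
      by_cases hv : v ∈ h
      · refine Or.inr ⟨hᶜ, ⟨⟨⟨(hy.compl_mem_iff hh).2 hhy, not_not.2 hv⟩,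
          ⟨(hw.compl_mem_iff hh).2 hhw, not_not.2 hv⟩⟩, ?_⟩, compl_compl h⟩
        simp only [hx.compl_mem_iff hh, hz.compl_mem_iff hh, hhx, hhz]
        tauto
      · exact Or.inl ⟨⟨⟨hhx, hv⟩, hhz, hv⟩, by tauto⟩
    · rintro (⟨⟨⟨hhx, hv⟩, hhz, -⟩, hyw⟩ | ⟨k, ⟨⟨⟨hky, hkv⟩, hkw, -⟩, hxz⟩, rfl⟩)
      · exact ⟨hhx, hhz, fun hhy => hyw (Or.inl ⟨hhy, hv⟩),
          fun hhw => hyw (Or.inr ⟨hhw, hv⟩)⟩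
      · have hk := hy.1 k hky
        exact ⟨(hx.compl_mem_iff hk).2 fun hkx => hxz (Or.inl ⟨hkx, hkv⟩),
          (hz.compl_mem_iff hk).2 fun hkz => hxz (Or.inr ⟨hkz, hkv⟩),
          (hy.compl_mem_iff hk).not_left.2 hky, (hw.compl_mem_iff hk).not_left.2 hkw⟩
  have hdisj : Disjoint P (compl '' Q) := by
    rw [disjoint_left]
    rintro h ⟨⟨⟨-, hv⟩, -⟩, -⟩ ⟨k, ⟨⟨⟨-, hkv⟩, -⟩, -⟩, rfl⟩
    exact hkv (not_not.1 hv)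
  rw [sepCount, hsplit, encard_union_eq hdisj, compl_injective.encard_image]

theorem sepCount_le_grom_add_grom {x y z w : Set (Set V)} (hx : IsUltra G x)
    (hy : IsUltra G y) (hz : IsUltra G z) (hw : IsUltra G w) (v : V) :
    sepCount x z y w ≤ grom G v x z + grom G v y w := by
  rw [sepCount_eq_encard_awayFrom hx hy hz hw v, grom_eq_encard_awayFrom_inter,
    grom_eq_encard_awayFrom_inter]
  exact add_le_add (encard_le_encard sdiff_subset) (encard_le_encard sdiff_subset)

theorem grom_add_grom_add_sepCount {x y z w : Set (Set V)} (hx : IsUltra G x)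
    (hy : IsUltra G y) (hz : IsUltra G z) (hw : IsUltra G w) (v : V) :
    grom G v x z + grom G v y w + sepCount x w y z =
      grom G v x w + grom G v y z + sepCount x z y w := by
  simp only [grom_eq_encard_awayFrom_inter, sepCount_eq_encard_awayFrom hx hy hw hz v,
    sepCount_eq_encard_awayFrom hx hy hz hw v]
  exact encard_inter_add_inter_add_diff_add_diff_swap _ _ _ _

theorem toE_add (m n : ℕ∞) : toE (m + n) = toE m + toE n := by
  simp only [toE, ENat.toENNReal_add, EReal.coe_ennreal_add]

theorem toE_natCast (n : ℕ) : toE n = ((n : ℝ) : EReal) := by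
  simp only [toE, ENat.toENNReal_coe]
  norm_cast

theorem toE_top : toE ⊤ = ⊤ := by
  simp only [toE, ENat.toENNReal_top, EReal.coe_ennreal_top]

theorem toE_ne_bot (n : ℕ∞) : toE n ≠ ⊥ := by
  simp [toE]

theorem crv_eq_toE_sub_toE (v : V) (x y z w : Set (Set V)) :
    crv G v x y z w =
      toE (grom G v x z + grom G v y w) - toE (grom G v x w + grom G v y z) := by
  rw [crv, toE_add, toE_add, sub_eq_add_neg _ (toE _ + toE _),
    EReal.neg_add (Or.inl (toE_ne_bot _)) (Or.inr (toE_ne_bot _))]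
  simp only [sub_eq_add_neg, add_assoc]

theorem toE_sub_toE_eq_of_add_eq {p q s t : ℕ∞} (h : p + t = q + s) (hs : s ≤ p)
    (ht : t ≤ q) (hpq : p ≠ ⊤ ∨ q ≠ ⊤) : toE p - toE q = toE s - toE t := by
  rcases eq_or_ne p ⊤ with rfl | hp <;> rcases eq_or_ne q ⊤ with rfl | hq
  · simp at hpq
  · lift q to ℕ using hq
    lift t to ℕ using ne_top_of_le_ne_top (ENat.natCast_ne_top q) ht
    obtain rfl : s = ⊤ := by simpa using h.symm
    simp only [toE_top, toE_natCast, EReal.top_sub_coe]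
  · lift p to ℕ using hp
    lift s to ℕ using ne_top_of_le_ne_top (ENat.natCast_ne_top p) hs
    obtain rfl : t = ⊤ := by simpa using h
    simp only [toE_top, EReal.sub_top]
  · lift p to ℕ using hp
    lift q to ℕ using hq
    lift s to ℕ using ne_top_of_le_ne_top (ENat.natCast_ne_top p) hs
    lift t to ℕ using ne_top_of_le_ne_top (ENat.natCast_ne_top q) ht
    have h' : (p : ℝ) + t = q + s := by exact_mod_cast h
    simp only [toE_natCast, ← EReal.coe_sub]
    congr 1
    linarith

end CCCR

open CCCR
theorem stmt3_general {V : Type*} (G : SimpleGraph V) (v : V)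
    (x y z w : Set (Set V)) (hx : IsUltra G x) (hy : IsUltra G y)
    (hz : IsUltra G z) (hw : IsUltra G w) (hA : memA G x y z w) :
    crv G v x y z w = toE (sepCount x z y w) - toE (sepCount x w y z) ∧
      (sepCount x z y w ≠ ⊤ ∨ sepCount x w y z ≠ ⊤) := by
  have hfin : grom G v x z + grom G v y w ≠ ⊤ ∨ grom G v x w + grom G v y z ≠ ⊤ := by
    rcases hA v with ⟨-, h⟩ | ⟨-, h⟩ | ⟨h, -⟩
    exacts [Or.inl h, Or.inr h, Or.inl h]
  have hxz := sepCount_le_grom_add_grom hx hy hz hw v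
  have hxw := sepCount_le_grom_add_grom hx hy hw hz v
  refine ⟨?_, hfin.imp (ne_top_of_le_ne_top · hxz) (ne_top_of_le_ne_top · hxw)⟩
  rw [crv_eq_toE_sub_toE]
  exact toE_sub_toE_eq_of_add_eq (grom_add_grom_add_sepCount hx hy hz hw v) hxz hxw hfin

/-- Proposition `independent of basepoint`: for every vertex `v`
and every 4-tuple `(x,y,z,w) ∈ 𝒜` one has
`cr_v(x,y,z,w) = #𝒲(x,z|y,w) − #𝒲(x,w|y,z)`, and at most one of the two
cardinalities on the right is infinite. -/
theorem stmt3 {V : Type*} (G : SimpleGraph V) (hG : IsCCC G) (v : V)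
    (x y z w : Set (Set V)) (hx : IsUltra G x) (hy : IsUltra G y)
    (hz : IsUltra G z) (hw : IsUltra G w) (hA : memA G x y z w) :
    crv G v x y z w = toE (sepCount x z y w) - toE (sepCount x w y z) ∧
      (sepCount x z y w ≠ ⊤ ∨ sepCount x w y z ≠ ⊤) :=
  stmt3_general G v x y z w hx hy hz hw hA
end

section
/- Let X be a CAT(0) cube complex and let x, y, z ∈ X̄ satisfy x op_z y, with m := m(x,y,z) ∈ X. Then for every w ∈ ∂X, either (x·w)_m = 0 or (y·w)_m = 0. -/
/-!
We use the standard combinatorial model of a CAT(0) cube complex: it is identified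
with its vertex set endowed with the combinatorial (ℓ¹) metric, i.e. with a median
graph `G` on a vertex type `V`.  Halfspaces are realised as the vertex sets of the
two sides of the hyperplane dual to an edge, the Roller compactification `X̄` is the
set of ultrafilters of halfspaces, vertices embedding via principal ultrafilters,
and the Roller boundary `∂X` consists of the non-principal ultrafilters.
-/

open scoped ENNReal
open Set

/-!
The median `m(x,y,w)` lies in `I(x,y) = I(x,p) ∪ I(p,y)`. If it lies in `I(x,p)` and a
halfspace `k` contains `y` and `w` but not `p`, then `k ∉ x` (as `x ∩ y ⊆ p`), so `kᶜ`
belongs to `x ∩ p ⊆ m(x,y,w)` while `k` belongs to `y ∩ w ⊆ m(x,y,w)`, which is absurd.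
-/

namespace CCCR

variable {V : Type*} {G : SimpleGraph V}

theorem mem_med_iff {x y z : Set (Set V)} {h : Set V} :
    h ∈ med x y z ↔ (h ∈ x ∧ h ∈ y) ∨ (h ∈ y ∧ h ∈ z) ∨ (h ∈ z ∧ h ∈ x) := by
  simp only [med, mem_union, mem_inter_iff, or_assoc]

theorem med_comm (x y z : Set (Set V)) : med x y z = med y x z := by
  ext h
  simp only [mem_med_iff]
  tauto

theorem inter_subset_med (x y z : Set (Set V)) : x ∩ y ⊆ med x y z :=
  fun _ h => mem_med_iff.2 (Or.inl h)

theorem IsUltra.compl_mem_of_notMem {σ : Set (Set V)} (hσ : IsUltra G σ) {h : Set V}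
    (hh : IsHalfspace G h) (hnot : h ∉ σ) : hᶜ ∈ σ := by
  by_contra hc
  exact hnot ((hσ.2.1 h hh).2 hc)

theorem IsUltra.compl_notMem {σ : Set (Set V)} (hσ : IsUltra G σ) {h : Set V}
    (hh : h ∈ σ) : hᶜ ∉ σ :=
  (hσ.2.1 h (hσ.1 h hh)).1 hh

theorem IsUltra.med {x y z : Set (Set V)} (hx : IsUltra G x) (hy : IsUltra G y)
    (hz : IsUltra G z) : IsUltra G (med x y z) := by
  refine ⟨fun h hh => ?_, fun h hh => ?_, fun h hh k hk => ?_⟩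
  · rcases mem_med_iff.1 hh with ⟨hh, -⟩ | ⟨hh, -⟩ | ⟨hh, -⟩
    exacts [hx.1 h hh, hy.1 h hh, hz.1 h hh]
  · have := hx.2.1 h hh
    have := hy.2.1 h hh
    have := hz.2.1 h hh
    simp only [mem_med_iff]
    tauto
  · -- two members of the median each lie in two of `x`, `y`, `z`, hence share one of them
    have : (h ∈ x ∧ k ∈ x) ∨ (h ∈ y ∧ k ∈ y) ∨ (h ∈ z ∧ k ∈ z) := by
      rw [mem_med_iff] at hh hk
      tauto
    rcases this with ⟨hh, hk⟩ | ⟨hh, hk⟩ | ⟨hh, hk⟩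
    exacts [hx.2.2 h hh k hk, hy.2.2 h hh k hk, hz.2.2 h hh k hk]

/-- `hxy` says `p ∈ I(x,y)` and `hmed` says `m(x,y,w) ∈ I(x,p)`. -/
theorem grom_eq_zero_of_inter_princ_subset_med {x y w : Set (Set V)} {p : V}
    (hx : IsUltra G x) (hy : IsUltra G y) (hw : IsUltra G w)
    (hxy : x ∩ y ⊆ princ G p) (hmed : x ∩ princ G p ⊆ med x y w) :
    grom G p y w = 0 := by
  rw [grom, encard_eq_zero, eq_empty_iff_forall_notMem]
  rintro k ⟨hky, hkw, hkp⟩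
  have hkx : k ∉ x := fun hkx => hkp (hxy ⟨hkx, hky⟩).2
  have hkcx : kᶜ ∈ x := hx.compl_mem_of_notMem (hy.1 k hky) hkx
  have hkc : kᶜ ∈ med x y w := hmed ⟨hkcx, hx.1 _ hkcx, hkp⟩
  exact (hx.med hy hw).compl_notMem (mem_med_iff.2 (Or.inr (Or.inl ⟨hky, hkw⟩))) hkc

end CCCR

open CCCR
theorem stmt5_general {V : Type*} (G : SimpleGraph V)
    (x y z : Set (Set V)) (hx : IsUltra G x) (hy : IsUltra G y)
    (hop : Op G x y z) (p : V) (hp : med x y z = princ G p)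
    (w : Set (Set V)) (hw : IsBdryPt G w) :
    grom G p x w = 0 ∨ grom G p y w = 0 := by
  have hmed : med x y w ∈ rInterval G x y := ⟨hx.med hy hw.1, inter_subset_med x y w⟩
  have hxy : x ∩ y ⊆ princ G p := hp ▸ inter_subset_med x y z
  rw [hop.2, hp] at hmed
  rcases hmed with ⟨-, hmed⟩ | ⟨-, hmed⟩
  · exact Or.inr (grom_eq_zero_of_inter_princ_subset_med hx hy hw.1 hxy hmed)
  · refine Or.inl (grom_eq_zero_of_inter_princ_subset_med hy hx hw.1 ?_ ?_)
    · rwa [inter_comm]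
    · rwa [med_comm, inter_comm]

/-- Remark `one is zero`: if `x` and `y` are opposite with respect
to `z`, with median the vertex `p`, then for every boundary point `w` one of the
Gromov products `(x·w)_p`, `(y·w)_p` vanishes. -/
theorem stmt5 {V : Type*} (G : SimpleGraph V) (hG : IsCCC G)
    (x y z : Set (Set V)) (hx : IsUltra G x) (hy : IsUltra G y) (hz : IsUltra G z)
    (hop : Op G x y z) (p : V) (hp : med x y z = princ G p)
    (w : Set (Set V)) (hw : IsBdryPt G w) :
    grom G p x w = 0 ∨ grom G p y w = 0 :=
  stmt5_general G x y z hx hy hop p hp w hw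
end
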